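/- Under the hypotheses of the independent-errors lemma, if additionally each Ei acts non-trivially on a set Si of size k, then Pr[(El ∘ ⋯ ∘ E1)(x) ≠ x] ≥ 1 − (1 − 2^{-(k-1)})^l for x uniform on {0,1}^n. -/

import Mathlib

/-!
A permutation acting locally on the coordinates `s` has a fixed-point set that is a cylinder over
`s`, so for pairwise disjoint supports the fixed-point sets are independent events under the
uniform measure, and the composite fixes `x` exactly when every factor does. Hence the
probability that the composite fixes `x` is the product of the individual ones. A single
`E ≠ id` moves some `x`; then it moves the whole fibre of `x` over `s`, and also the fibre of
`E x`, which differs from `x` on `s`. Each fibre has density `2 ^ (-k)`, so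
`Pr[E x = x] ≤ 1 - 2 ^ (-(k - 1))`.
-/

open Finset Equiv Function

section Counting

variable {ι β : Type*} [Fintype ι] [DecidableEq ι] [Fintype β]

/-- Swapping the `s`-coordinates of two points is a bijection `(A ∩ C) × univ ≃ A × C`. -/
theorem card_filter_and_mul_card_univ {s t : Finset ι} (hst : Disjoint s t)
    {p q : (ι → β) → Prop} [DecidablePred p] [DecidablePred q]
    (hp : DependsOn p s) (hq : DependsOn q t) :
    #{x | p x ∧ q x} * Fintype.card (ι → β) = #{x | p x} * #{x | q x} := by
  have hpw : ∀ z w : ι → β, p (s.piecewise z w) = p z := fun z w =>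
    hp fun i hi => s.piecewise_eq_of_mem z w hi
  have hqw : ∀ z w : ι → β, q (s.piecewise z w) = q w := fun z w =>
    hq fun i hi => s.piecewise_eq_of_notMem z w (disjoint_right.1 hst hi)
  let swap : (ι → β) × (ι → β) → (ι → β) × (ι → β) :=
    fun x => (s.piecewise x.1 x.2, s.piecewise x.2 x.1)
  have swap_swap : ∀ x, swap (swap x) = x := by
    rintro ⟨z, w⟩
    ext i <;> by_cases hi : i ∈ s <;> simp [swap, hi]
  rw [← card_univ, ← card_product, ← card_product]
  refine card_nbij' swap swap ?_ ?_ (fun x _ => swap_swap x) (fun x _ => swap_swap x)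
  · rintro ⟨z, w⟩ h
    simp_all [swap]
  · rintro ⟨z, w⟩ h
    simp_all [swap]

theorem card_filter_forall_mem_eq [DecidableEq β] (s : Finset ι) (x : ι → β) :
    #{y : ι → β | ∀ m ∈ s, y m = x m} = Fintype.card β ^ (Fintype.card ι - #s) := by
  have : ({y | ∀ m ∈ s, y m = x m} : Finset (ι → β)) =
      Fintype.piFinset fun m => if m ∈ s then {x m} else univ := by
    ext y
    simp only [mem_filter, mem_univ, true_and, Fintype.mem_piFinset]
    refine ⟨fun h m => ?_, fun h m hm => by simpa [hm] using h m⟩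
    split_ifs with hm <;> simp [h m, hm]
  rw [this, Fintype.card_piFinset]
  simp only [apply_ite card, card_singleton, card_univ]
  rw [prod_ite, prod_const_one, one_mul, prod_const, filter_not, card_sdiff]
  simp

end Counting

variable {ι β : Type*}

structure IsLocalOn (e : Perm (ι → β)) (s : Finset ι) : Prop where
  apply_of_notMem : ∀ x, ∀ m ∉ s, e x m = x m
  dependsOn : ∀ m ∈ s, DependsOn (fun x => e x m) s

namespace IsLocalOn

variable {e f : Perm (ι → β)} {s t : Finset ι}

theorem apply_eq_self_iff (he : IsLocalOn e s) {x : ι → β} :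
    e x = x ↔ ∀ m ∈ s, e x m = x m := by
  refine ⟨fun h m _ => by rw [h], fun h => funext fun m => ?_⟩
  by_cases hm : m ∈ s
  exacts [h m hm, he.apply_of_notMem x m hm]

theorem dependsOn_apply_eq_self (he : IsLocalOn e s) : DependsOn (fun x => e x = x) s := by
  intro x y hxy
  simp only [he.apply_eq_self_iff, eq_iff_iff]
  exact forall₂_congr fun m hm => by
    rw [show e x m = e y m from he.dependsOn m hm hxy, hxy m hm]

theorem exists_apply_ne (he : IsLocalOn e s) (hne : e ≠ 1) :
    ∃ x, ∃ m ∈ s, e x m ≠ x m := by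
  obtain ⟨x, hx⟩ : ∃ x, e x ≠ x := not_forall.1 fun h => hne (Equiv.ext h)
  exact ⟨x, by simpa using mt he.apply_eq_self_iff.2 hx⟩

theorem mul_apply_of_mem_left (hf : IsLocalOn f t) (hst : Disjoint s t)
    (x : ι → β) {m : ι} (hm : m ∈ s) : (f * e) x m = e x m :=
  hf.apply_of_notMem _ m (disjoint_left.1 hst hm)

theorem mul_apply_of_mem_right (he : IsLocalOn e s) (hf : IsLocalOn f t) (hst : Disjoint s t)
    (x : ι → β) {m : ι} (hm : m ∈ t) : (f * e) x m = f x m :=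
  hf.dependsOn m hm fun i hi => he.apply_of_notMem x i (disjoint_right.1 hst hi)

variable [DecidableEq ι]

theorem mul (he : IsLocalOn e s) (hf : IsLocalOn f t) (hst : Disjoint s t) :
    IsLocalOn (f * e) (s ∪ t) where
  apply_of_notMem x m hm := by
    rw [mem_union, not_or] at hm
    rw [Perm.mul_apply, hf.apply_of_notMem _ m hm.2, he.apply_of_notMem x m hm.1]
  dependsOn m hm x y hxy := by
    rcases mem_union.1 hm with hm | hm
    · simp only [hf.mul_apply_of_mem_left hst _ hm]
      exact he.dependsOn m hm fun i hi => hxy i (mem_union_left t hi)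
    · simp only [he.mul_apply_of_mem_right hf hst _ hm]
      exact hf.dependsOn m hm fun i hi => hxy i (mem_union_right s hi)

theorem mul_apply_eq_self_iff (he : IsLocalOn e s) (hf : IsLocalOn f t) (hst : Disjoint s t)
    {x : ι → β} : (f * e) x = x ↔ e x = x ∧ f x = x := by
  rw [(he.mul hf hst).apply_eq_self_iff, he.apply_eq_self_iff, hf.apply_eq_self_iff,
    forall_mem_union]
  exact and_congr (forall₂_congr fun m hm => by rw [hf.mul_apply_of_mem_left hst x hm])
    (forall₂_congr fun m hm => by rw [he.mul_apply_of_mem_right hf hst x hm])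

variable [Fintype ι] [Fintype β] [DecidableEq β]

theorem two_mul_card_pow_le_card_filter_apply_ne (he : IsLocalOn e s) (hne : e ≠ 1) :
    2 * Fintype.card β ^ (Fintype.card ι - #s) ≤ #{x | e x ≠ x} := by
  obtain ⟨x, m, hm, hxm⟩ := he.exists_apply_ne hne
  have hx : e x ≠ x := fun h => hxm (by rw [h])
  let fibre (z : ι → β) : Finset (ι → β) := {y | ∀ m ∈ s, y m = z m}
  have fibre_subset : ∀ z, e z ≠ z → fibre z ⊆ ({x | e x ≠ x} : Finset (ι → β)) :=
    fun z hz y hy => by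
      simp only [fibre, mem_filter, mem_univ, true_and] at hy ⊢
      exact fun h => hz (cast (he.dependsOn_apply_eq_self hy) h)
  have hdisj : Disjoint (fibre x) (fibre (e x)) :=
    disjoint_filter.2 fun y _ hy hy' => hxm (by rw [← hy m hm, hy' m hm])
  calc 2 * Fintype.card β ^ (Fintype.card ι - #s) = #(fibre x ∪ fibre (e x)) := by
        rw [card_union_of_disjoint hdisj, card_filter_forall_mem_eq, card_filter_forall_mem_eq,
          two_mul]
    _ ≤ #{x | e x ≠ x} :=
        card_le_card (union_subset (fibre_subset x hx)
          (fibre_subset _ fun h => hx (e.injective h)))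

end IsLocalOn

theorem IsLocalOn.card_filter_apply_eq_self_le {n : ℕ} {e : Perm (Fin n → Bool)}
    {s : Finset (Fin n)} (he : IsLocalOn e s) (hne : e ≠ 1) :
    (#{x | e x = x} : ℝ) ≤ (1 - ((2 : ℝ) ^ (#s - 1))⁻¹) * 2 ^ n := by
  have hmoved := he.two_mul_card_pow_le_card_filter_apply_ne hne
  simp only [Fintype.card_bool, Fintype.card_fin] at hmoved
  have hs : 1 ≤ #s := by
    obtain ⟨-, m, hm, -⟩ := he.exists_apply_ne hne
    exact card_pos.2 ⟨m, hm⟩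
  have hsn : #s ≤ n := by simpa using card_le_univ s
  have hpow : ((2 : ℝ) ^ (#s - 1))⁻¹ * 2 ^ n = 2 * 2 ^ (n - #s) := by
    rw [inv_mul_eq_div, div_eq_iff (by positivity), ← pow_succ', ← pow_add]
    congr 1
    omega
  have hsplit : (#{x | e x = x} : ℝ) + #{x | e x ≠ x} = 2 ^ n := by
    exact_mod_cast (card_filter_add_card_filter_not _).trans (by simp)
  have : (2 : ℝ) * 2 ^ (n - #s) ≤ #{x | e x ≠ x} := by exact_mod_cast hmoved
  linarith

theorem isLocalOn_prod_ofFn_reverse [DecidableEq ι] {l : ℕ} (E : Fin l → Perm (ι → β))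
    (S : Fin l → Finset ι) (hS : Pairwise (Disjoint on S)) (hE : ∀ i, IsLocalOn (E i) (S i)) :
    IsLocalOn (List.ofFn E).reverse.prod (univ.biUnion S) := by
  induction l with
  | zero => exact ⟨fun _ _ _ => rfl, fun m hm => by simp at hm⟩
  | succ l ih =>
    have hunion : univ.biUnion S = S 0 ∪ univ.biUnion fun i : Fin l => S i.succ := by
      ext; simp [Fin.exists_fin_succ]
    rw [List.ofFn_succ, List.reverse_cons, List.prod_append, List.prod_singleton, hunion]
    exact (hE 0).mul (ih _ _ (hS.comp_of_injective (Fin.succ_injective l)) fun i => hE i.succ)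
      ((disjoint_biUnion_right _ _ _).2 fun i _ => hS (Fin.succ_ne_zero i).symm)

theorem card_filter_prod_ofFn_reverse_apply_eq_self_le {n k l : ℕ}
    (E : Fin l → Perm (Fin n → Bool)) (S : Fin l → Finset (Fin n)) (hk : ∀ i, #(S i) = k)
    (hS : Pairwise (Disjoint on S)) (hE : ∀ i, IsLocalOn (E i) (S i)) (hne : ∀ i, E i ≠ 1) :
    (#{x | (List.ofFn E).reverse.prod x = x} : ℝ) ≤
      (1 - ((2 : ℝ) ^ (k - 1))⁻¹) ^ l * 2 ^ n := by
  induction l with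
  | zero => simp
  | succ l ih =>
    have hS' : Pairwise (Disjoint on fun i : Fin l => S i.succ) :=
      hS.comp_of_injective (Fin.succ_injective l)
    have hrest := isLocalOn_prod_ofFn_reverse _ _ hS' fun i => hE i.succ
    have hdisj : Disjoint (S 0) (univ.biUnion fun i : Fin l => S i.succ) :=
      (disjoint_biUnion_right _ _ _).2 fun i _ => hS (Fin.succ_ne_zero i).symm
    have hindep := card_filter_and_mul_card_univ hdisj (hE 0).dependsOn_apply_eq_self
      hrest.dependsOn_apply_eq_self
    have hfirst := (hE 0).card_filter_apply_eq_self_le (hne 0)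
    have hlast := ih _ _ (fun i => hk i.succ) hS' (fun i => hE i.succ) fun i => hne i.succ
    rw [hk 0] at hfirst
    simp only [← (hE 0).mul_apply_eq_self_iff hrest hdisj, Fintype.card_pi, Fintype.card_bool,
      prod_const, card_univ, Fintype.card_fin] at hindep
    rw [List.ofFn_succ, List.reverse_cons, List.prod_append, List.prod_singleton,
      ← mul_le_mul_iff_of_pos_right (by positivity : (0 : ℝ) < 2 ^ n)]
    set c : ℝ := 1 - ((2 : ℝ) ^ (k - 1))⁻¹
    set P := (List.ofFn fun i : Fin l => E i.succ).reverse.prod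
    calc (#{x | (P * E 0) x = x} : ℝ) * 2 ^ n = #{x | E 0 x = x} * #{x | P x = x} := by
          exact_mod_cast hindep
      _ ≤ (c * 2 ^ n) * (c ^ l * 2 ^ n) :=
          mul_le_mul hfirst hlast (by positivity) (le_trans (by positivity) hfirst)
      _ = c ^ (l + 1) * 2 ^ n * 2 ^ n := by ring

theorem stmt_12 (n l k : ℕ) (E : Fin l → Equiv.Perm (Fin n → Bool))
    (S : Fin l → Finset (Fin n)) (hk : ∀ i, (S i).card = k)
    (hdisj : ∀ i j, i ≠ j → Disjoint (S i) (S j))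
    (hfix : ∀ i, ∀ x : Fin n → Bool, ∀ m ∉ S i, E i x m = x m)
    (hdep : ∀ i, ∀ x y : Fin n → Bool, (∀ m ∈ S i, x m = y m) → ∀ m ∈ S i, E i x m = E i y m)
    (hne : ∀ i, E i ≠ 1) :
    1 - (1 - ((2 : ℝ) ^ (k - 1))⁻¹) ^ l ≤
      ((Finset.univ.filter fun x => (List.ofFn E).reverse.prod x ≠ x).card : ℝ) / 2 ^ n := by
  have hE : ∀ i, IsLocalOn (E i) (S i) := fun i =>
    ⟨hfix i, fun m hm x y hxy => hdep i x y hxy m hm⟩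
  have hfixed := card_filter_prod_ofFn_reverse_apply_eq_self_le E S hk hdisj hE hne
  have hsplit : (#{x | (List.ofFn E).reverse.prod x = x} : ℝ) +
      #{x | (List.ofFn E).reverse.prod x ≠ x} = 2 ^ n := by
    exact_mod_cast (card_filter_add_card_filter_not _).trans (by simp)
  rw [le_div_iff₀ (by positivity)]
  linarith
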